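/- Let 1 → N → G → Γ → 1 be a short exact sequence of groups. Then genrk(G) ≤ genrk(N) + genrk(Γ). -/

import Mathlib

open scoped commutatorElement

/-- The mixed commutator length `cl_{G,N}` (∞ if not a product of mixed commutators). -/
noncomputable def clGN {G : Type*} [Group G] (N : Subgroup G) (x : G) : ℕ∞ :=
  sInf {n : ℕ∞ | ∃ k : ℕ, n = k ∧ ∃ g v : Fin k → G, (∀ i, v i ∈ N) ∧
    x = (List.ofFn fun i => ⁅g i, v i⁆).prod}

/-- The rank of a subgroup: minimal size of a generating set. -/
noncomputable def rk {G : Type*} [Group G] (H : Subgroup G) : ℕ∞ :=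
  sInf {n : ℕ∞ | ∃ S : Finset G, Subgroup.closure (S : Set G) = H ∧ n = S.card}

/-- The intermediate rank `intrk^Γ(Λ) = inf {rk Θ | Λ ≤ Θ ≤ Γ}`. -/
noncomputable def intrk {G : Type*} [Group G] (Λ : Subgroup G) : ℕ∞ :=
  sInf {n : ℕ∞ | ∃ Θ : Subgroup G, Λ ≤ Θ ∧ n = rk Θ}

/-- The general rank in the sense of Malcev. -/
noncomputable def genrk (G : Type*) [Group G] : ℕ∞ :=
  sSup {n : ℕ∞ | ∃ Λ : Subgroup G, Λ.FG ∧ n = intrk Λ}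

/-- The special rank in the sense of Malcev. -/
noncomputable def sperk (G : Type*) [Group G] : ℕ∞ :=
  sSup {n : ℕ∞ | ∃ Λ : Subgroup G, Λ.FG ∧ n = rk Λ}

/-!
Cover a finitely generated `Λ ≤ G` in two halves. Its image in `Γ` lies in some `Θ` of rank
`≤ genrk Γ`; lifting generators of `Θ` gives `L ≤ G` of no larger rank with `q Λ ≤ q L`. Then each
generator `s` of `Λ` is `(s f⁻¹) f` with `f ∈ L` and `s f⁻¹` in the kernel, so `Λ ≤ M ⊔ L` for a
finitely generated `M ≤ i N`. The preimage of `M` lies in some `Ψ ≤ N` of rank `≤ genrk N`, and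
`i Ψ ⊔ L ≥ Λ` has rank at most `rk Ψ + rk L`.
-/

section Rank

variable {G H : Type*} [Group G] [Group H]

lemma rk_closure_le_card (S : Finset G) : rk (Subgroup.closure (S : Set G)) ≤ S.card :=
  sInf_le ⟨S, rfl, rfl⟩

lemma exists_finset_closure_eq_card_eq_rk {K : Subgroup G} (h : rk K ≠ ⊤) :
    ∃ S : Finset G, Subgroup.closure (S : Set G) = K ∧ (S.card : ℕ∞) = rk K := by
  have hne : {n : ℕ∞ | ∃ S : Finset G, Subgroup.closure (S : Set G) = K ∧ n = S.card}.Nonempty := by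
    by_contra hc
    exact h (by rw [rk, Set.not_nonempty_iff_eq_empty.mp hc, sInf_empty])
  obtain ⟨S, hS, hcard⟩ := csInf_mem hne
  exact ⟨S, hS, hcard.symm⟩

lemma rk_sup_le (A B : Subgroup G) : rk (A ⊔ B) ≤ rk A + rk B := by
  classical
  by_cases hA : rk A = ⊤
  · simp [hA]
  by_cases hB : rk B = ⊤
  · simp [hB]
  obtain ⟨SA, rfl, hSA⟩ := exists_finset_closure_eq_card_eq_rk hA
  obtain ⟨SB, rfl, hSB⟩ := exists_finset_closure_eq_card_eq_rk hB
  calc rk (Subgroup.closure (SA : Set G) ⊔ Subgroup.closure (SB : Set G))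
      = rk (Subgroup.closure ((SA ∪ SB : Finset G) : Set G)) := by
        rw [Finset.coe_union, Subgroup.closure_union]
    _ ≤ (SA ∪ SB).card := rk_closure_le_card _
    _ ≤ SA.card + SB.card := mod_cast Finset.card_union_le SA SB
    _ = _ := by rw [hSA, hSB]

lemma rk_map_le (f : G →* H) (K : Subgroup G) : rk (K.map f) ≤ rk K := by
  classical
  by_cases hK : rk K = ⊤
  · simp [hK]
  obtain ⟨S, rfl, hS⟩ := exists_finset_closure_eq_card_eq_rk hK
  calc rk ((Subgroup.closure (S : Set G)).map f)
      = rk (Subgroup.closure ((S.image f : Finset H) : Set H)) := by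
        rw [MonoidHom.map_closure, Finset.coe_image]
    _ ≤ (S.image f).card := rk_closure_le_card _
    _ ≤ S.card := mod_cast Finset.card_image_le
    _ = rk _ := hS

lemma exists_map_eq_rk_le {f : G →* H} (hf : Function.Surjective f) (K : Subgroup H) :
    ∃ L : Subgroup G, L.map f = K ∧ rk L ≤ rk K := by
  classical
  by_cases hK : rk K = ⊤
  · exact ⟨K.comap f, Subgroup.map_comap_eq_self_of_surjective hf K, hK ▸ le_top⟩
  obtain ⟨S, rfl, hS⟩ := exists_finset_closure_eq_card_eq_rk hK
  refine ⟨Subgroup.closure ((S.image (Function.surjInv hf) : Finset G) : Set G), ?_, ?_⟩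
  · rw [MonoidHom.map_closure, Finset.coe_image, Set.image_image]
    simp only [Function.surjInv_eq hf, Set.image_id']
  · calc _ ≤ ((S.image (Function.surjInv hf)).card : ℕ∞) := rk_closure_le_card _
      _ ≤ S.card := mod_cast Finset.card_image_le
      _ = _ := hS

lemma exists_le_rk_eq_intrk (Λ : Subgroup G) : ∃ Θ : Subgroup G, Λ ≤ Θ ∧ rk Θ = intrk Λ := by
  obtain ⟨Θ, hΛΘ, hΘ⟩ := csInf_mem (s := {n : ℕ∞ | ∃ Θ : Subgroup G, Λ ≤ Θ ∧ n = rk Θ})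
    ⟨rk ⊤, ⊤, le_top, rfl⟩
  exact ⟨Θ, hΛΘ, hΘ.symm⟩

lemma intrk_le_rk_of_le {Λ Θ : Subgroup G} (h : Λ ≤ Θ) : intrk Λ ≤ rk Θ :=
  sInf_le ⟨Θ, h, rfl⟩

lemma intrk_le_genrk {Λ : Subgroup G} (h : Λ.FG) : intrk Λ ≤ genrk G :=
  le_sSup ⟨Λ, h, rfl⟩

lemma exists_le_rk_le_genrk {Λ : Subgroup G} (h : Λ.FG) :
    ∃ Θ : Subgroup G, Λ ≤ Θ ∧ rk Θ ≤ genrk G := by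
  obtain ⟨Θ, hΛΘ, hΘ⟩ := exists_le_rk_eq_intrk Λ
  exact ⟨Θ, hΛΘ, hΘ ▸ intrk_le_genrk h⟩

end Rank

section Extension

variable {N G Γ : Type*} [Group N] [Group G] [Group Γ]

lemma Subgroup.FG.map {K : Subgroup G} (hK : K.FG) (q : G →* Γ) : (K.map q).FG := by
  classical
  obtain ⟨S, rfl⟩ := hK
  exact ⟨S.image q, by rw [Finset.coe_image, MonoidHom.map_closure]⟩

lemma Subgroup.FG.exists_fg_le_ker_le_sup {q : G →* Γ} {Λ L : Subgroup G} (hΛ : Λ.FG)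
    (hΛL : Λ.map q ≤ L.map q) : ∃ M : Subgroup G, M.FG ∧ M ≤ q.ker ∧ Λ ≤ M ⊔ L := by
  classical
  obtain ⟨S, rfl⟩ := hΛ
  have hlift : ∀ s ∈ S, ∃ f ∈ L, q f = q s := fun s hs =>
    hΛL ⟨s, Subgroup.subset_closure hs, rfl⟩
  choose! f hfL hfq using hlift
  refine ⟨Subgroup.closure ((S.image fun s => s * (f s)⁻¹ : Finset G) : Set G), ⟨_, rfl⟩, ?_, ?_⟩
  · rw [Subgroup.closure_le, Finset.coe_image]
    rintro _ ⟨s, hs, rfl⟩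
    simp [hfq s hs]
  · rw [Subgroup.closure_le]
    intro s hs
    rw [← inv_mul_cancel_right s (f s)]
    exact Subgroup.mul_mem _
      (Subgroup.mem_sup_left (Subgroup.subset_closure (Finset.mem_image_of_mem _ hs)))
      (Subgroup.mem_sup_right (hfL s hs))

lemma Subgroup.FG.exists_fg_map_eq {i : N →* G} {M : Subgroup G} (hM : M.FG) (hMi : M ≤ i.range) :
    ∃ M' : Subgroup N, M'.FG ∧ M'.map i = M := by
  classical
  obtain ⟨S, rfl⟩ := hM
  have hS : (S : Set G) ⊆ i '' Set.univ := by
    simpa [Set.image_univ] using Subgroup.subset_closure.trans hMi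
  obtain ⟨S', -, hS'⟩ := Finset.subset_set_image_iff.mp hS
  exact ⟨Subgroup.closure (S' : Set N), ⟨S', rfl⟩, by
    rw [MonoidHom.map_closure, ← Finset.coe_image, hS']⟩

end Extension

theorem genrk_le_add_of_exact_general {N G Γ : Type*} [Group N] [Group G] [Group Γ]
    (i : N →* G) (q : G →* Γ) (hq : Function.Surjective q)
    (hker : i.range = q.ker) :
    genrk G ≤ genrk N + genrk Γ := by
  refine sSup_le ?_
  rintro _ ⟨Λ, hΛ, rfl⟩
  obtain ⟨Θ, hΛΘ, hΘ⟩ := exists_le_rk_le_genrk (hΛ.map q)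
  obtain ⟨L, rfl, hL⟩ := exists_map_eq_rk_le hq Θ
  obtain ⟨M, hM, hMker, hΛM⟩ := hΛ.exists_fg_le_ker_le_sup hΛΘ
  obtain ⟨M', hM', rfl⟩ := hM.exists_fg_map_eq (hker ▸ hMker)
  obtain ⟨Ψ, hM'Ψ, hΨ⟩ := exists_le_rk_le_genrk hM'
  calc intrk Λ ≤ rk (Ψ.map i ⊔ L) :=
        intrk_le_rk_of_le (hΛM.trans (sup_le_sup_right (Subgroup.map_mono hM'Ψ) L))
    _ ≤ rk (Ψ.map i) + rk L := rk_sup_le _ _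
    _ ≤ genrk N + genrk Γ := add_le_add ((rk_map_le i Ψ).trans hΨ) (hL.trans hΘ)

/-- general rank is subadditive in short exact sequences. -/
theorem genrk_le_add_of_exact {N G Γ : Type*} [Group N] [Group G] [Group Γ]
    (i : N →* G) (q : G →* Γ) (hi : Function.Injective i) (hq : Function.Surjective q)
    (hker : i.range = q.ker) :
    genrk G ≤ genrk N + genrk Γ :=
  genrk_le_add_of_exact_general i q hq hker
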